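/- arXiv:2103.02564 — 2 statements merged into one kernel-verified Lean document; each statement's English description precedes it below -/
import Mathlib

section
/- Let d ≥ 1 and let p : ℝ^d → ℝ be a nonnegative smooth function with compact support. Then ∫_{ℝ^d} |∇p(x)|⁴ dx ≤ 2 ∫_{ℝ^d} p(x)² (Δp(x))² dx + 16 ∫_{ℝ^d} p(x)² Σ_{i,j=1}^d (∂²_{x_i x_j} p(x))² dx. -/
open MeasureTheory Real Set Filter Topology
open scoped RealInnerProductSpace
noncomputable section

/-- Spatial partial derivative in the `i`-th coordinate direction. -/
def pd {d : ℕ} (i : Fin d) (f : EuclideanSpace ℝ (Fin d) → ℝ)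
    (x : EuclideanSpace ℝ (Fin d)) : ℝ :=
  fderiv ℝ f x (EuclideanSpace.single i 1)

/-- Laplacian. -/
def lap {d : ℕ} (f : EuclideanSpace ℝ (Fin d) → ℝ) (x : EuclideanSpace ℝ (Fin d)) : ℝ :=
  ∑ i, pd i (pd i f) x

variable {d : ℕ}
abbrev E (d : ℕ) := EuclideanSpace ℝ (Fin d)

lemma pd_contDiff {f : E d → ℝ} (hf : ContDiff ℝ (⊤ : ℕ∞) f) (i : Fin d) :
    ContDiff ℝ (⊤ : ℕ∞) (pd i f) :=
  (hf.fderiv_right (by simp)).clm_apply contDiff_const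

lemma pd_zero_of_nmem {f : E d → ℝ} {x : E d}
    (hx : x ∉ tsupport f) (i : Fin d) : pd i f x = 0 := by
  have h : f =ᶠ[nhds x] 0 := by
    have : IsOpen (tsupport f)ᶜ := (isClosed_tsupport f).isOpen_compl
    filter_upwards [this.mem_nhds hx] with y hy
    exact image_eq_zero_of_notMem_tsupport hy
  have h2 : fderiv ℝ f x = fderiv ℝ (fun _ : E d => (0:ℝ)) x := Filter.EventuallyEq.fderiv_eq h
  simp [pd, h2]

lemma pd_support_subset {f : E d → ℝ} (i : Fin d) :
    Function.support (pd i f) ⊆ tsupport f := fun x hx => by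
  by_contra h; exact hx (pd_zero_of_nmem h i)

lemma pd_hcs {f : E d → ℝ} (hf : HasCompactSupport f) (i : Fin d) :
    HasCompactSupport (pd i f) :=
  HasCompactSupport.of_support_subset_isCompact hf (pd_support_subset i)

lemma integrable_cts {f : E d → ℝ} (hf : Continuous f) (h : HasCompactSupport f) :
    Integrable f := hf.integrable_of_hasCompactSupport h

lemma ibp {f g : E d → ℝ} (hf : ContDiff ℝ (⊤ : ℕ∞) f) (hg : ContDiff ℝ (⊤ : ℕ∞) g)
    (hgc : HasCompactSupport g) (i : Fin d) :
    ∫ x, f x * pd i g x = -∫ x, pd i f x * g x := by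
  have hfc := hf.continuous
  have hgcont := hg.continuous
  have h1 : Integrable (fun x => pd i f x * g x) :=
    integrable_cts (((pd_contDiff hf i).continuous).mul hgcont) (hgc.mul_left)
  have h2 : Integrable (fun x => f x * pd i g x) :=
    integrable_cts (hfc.mul (pd_contDiff hg i).continuous) ((pd_hcs hgc i).mul_left)
  have h3 : Integrable (fun x => f x * g x) := integrable_cts (hfc.mul hgcont) (hgc.mul_left)
  exact integral_mul_fderiv_eq_neg_fderiv_mul_of_integrable h1 h2 h3
    (fun x _ => hf.differentiable (by simp) x) (fun x _ => hg.differentiable (by simp) x)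

lemma pd_mul {u v : E d → ℝ} (hu : ContDiff ℝ (⊤ : ℕ∞) u) (hv : ContDiff ℝ (⊤ : ℕ∞) v) (i : Fin d) (x : E d) :
    pd i (fun y => u y * v y) x = pd i u x * v x + u x * pd i v x := by
  have h := ((hu.differentiable (by simp) x).hasFDerivAt).mul ((hv.differentiable (by simp) x).hasFDerivAt)
  rw [pd, show (fun y => u y * v y) = u * v from rfl, h.fderiv]
  simp [pd]
  ring

lemma pd_sum {ι : Type*} [Fintype ι] {F : ι → E d → ℝ} (hF : ∀ j, ContDiff ℝ (⊤ : ℕ∞) (F j))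
    (i : Fin d) (x : E d) :
    pd i (fun y => ∑ j, F j y) x = ∑ j, pd i (F j) x := by
  rw [pd, fderiv_fun_sum (fun j _ => ((hF j).differentiable (by simp) x))]
  simp [pd]

lemma young2 (b gx S Q : ℝ) (hb : 0 ≤ b) (hg : 0 ≤ gx) (hQ : 0 ≤ Q)
    (hS : S ^ 2 ≤ gx ^ 2 * Q) :
    -(2 * (b * S)) ≤ (1/4) * gx ^ 2 + 4 * (b ^ 2 * Q) := by
  have hR : 0 ≤ (1/4) * gx ^ 2 + 4 * (b ^ 2 * Q) := by positivity
  rcases le_or_gt (-(2 * (b * S))) 0 with h | h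
  · linarith
  · have h2 : (-(2 * (b * S))) ^ 2 ≤ ((1/4) * gx ^ 2 + 4 * (b ^ 2 * Q)) ^ 2 := by
      nlinarith [sq_nonneg ((1/4) * gx ^ 2 - 4 * (b ^ 2 * Q)),
        mul_le_mul_of_nonneg_left hS (show (0:ℝ) ≤ 4 * b ^ 2 by positivity)]
    nlinarith [h2, hR, h]

lemma young1 (b gx L S Q : ℝ) (hb : 0 ≤ b) (hg : 0 ≤ gx) (hQ : 0 ≤ Q)
    (hS : S ^ 2 ≤ gx ^ 2 * Q) :
    -(b * L * gx) - 2 * (b * S) ≤ (1/2) * gx ^ 2 + b ^ 2 * L ^ 2 + 4 * (b ^ 2 * Q) := by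
  have h1 : -(b * L * gx) ≤ (1/4) * gx ^ 2 + b ^ 2 * L ^ 2 := by
    nlinarith [sq_nonneg (gx/2 + b*L), sq_nonneg (gx/2 - b*L)]
  have h2 := young2 b gx S Q hb hg hQ hS
  linarith

lemma grad_norm_sq {p : E d → ℝ} (hp : ContDiff ℝ (⊤ : ℕ∞) p) (x : E d) :
    ‖gradient p x‖ ^ 2 = ∑ i, (pd i p x) ^ 2 := by
  have hcomp : ∀ i, (gradient p x) i = pd i p x := by
    intro i
    have h1 : ⟪gradient p x, EuclideanSpace.single i (1:ℝ)⟫ = fderiv ℝ p x (EuclideanSpace.single i 1) := by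
      simp [gradient, InnerProductSpace.toDual_symm_apply]
    rw [EuclideanSpace.inner_single_right] at h1
    simpa [pd] using h1
  rw [EuclideanSpace.norm_eq, Real.sq_sqrt (by positivity)]
  exact Finset.sum_congr rfl fun i _ => by rw [hcomp i]; simp [sq_abs]

/-- the integration-by-parts inequality behind the `L⁴` gradient estimate. -/
theorem stmt7 (d : ℕ) (hd : 1 ≤ d)
    (p : EuclideanSpace ℝ (Fin d) → ℝ)
    (hp : ContDiff ℝ (⊤ : ℕ∞) p) (hppos : ∀ x, 0 ≤ p x) (hsupp : HasCompactSupport p) :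
    (∫ x, ‖gradient p x‖ ^ 4)
      ≤ 2 * (∫ x, p x ^ 2 * (lap p x) ^ 2)
        + 16 * (∫ x, p x ^ 2 * ∑ i, ∑ j, (pd i (pd j p) x) ^ 2) := by
  classical
  set K := tsupport p with hKdef
  have hKc : IsCompact K := hsupp
  have hp0 : ∀ x ∉ K, p x = 0 := fun x hx => image_eq_zero_of_notMem_tsupport hx
  have ha0 : ∀ (i : Fin d) (x : E d), x ∉ K → pd i p x = 0 := fun i x hx =>
    pd_zero_of_nmem hx i
  have hHsupp : ∀ j : Fin d, tsupport (pd j p) ⊆ K := fun j =>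
    closure_minimal (pd_support_subset j) (isClosed_tsupport p)
  have hH0 : ∀ (i j : Fin d) (x : E d), x ∉ K → pd i (pd j p) x = 0 := fun i j x hx =>
    pd_zero_of_nmem (fun h => hx (hHsupp j h)) i
  have hcsOf : ∀ {f : E d → ℝ}, (∀ x ∉ K, f x = 0) → HasCompactSupport f :=
    fun h => HasCompactSupport.intro hKc h
  have hInt : ∀ {f : E d → ℝ}, Continuous f → (∀ x ∉ K, f x = 0) → Integrable f :=
    fun hc h0 => integrable_cts hc (hcsOf h0)
  set G : E d → ℝ := fun x => ∑ j, (pd j p x) ^ 2 with hGdef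
  have hA : ∀ i : Fin d, ContDiff ℝ (⊤ : ℕ∞) (pd i p) := fun i => pd_contDiff hp i
  have hHsm : ∀ i j : Fin d, ContDiff ℝ (⊤ : ℕ∞) (pd i (pd j p)) := fun i j =>
    pd_contDiff (hA j) i
  have hGsm : ContDiff ℝ (⊤ : ℕ∞) G := ContDiff.sum fun j _ => (hA j).pow 2
  have hG0 : ∀ x ∉ K, G x = 0 := by
    intro x hx; simp only [hGdef]
    exact Finset.sum_eq_zero fun j _ => by rw [ha0 j x hx]; ring
  have hGnn : ∀ x, 0 ≤ G x := fun x => Finset.sum_nonneg fun j _ => sq_nonneg _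
  have hLsm : ContDiff ℝ (⊤ : ℕ∞) (lap p) := by
    show ContDiff ℝ (⊤ : ℕ∞) fun x => ∑ i, pd i (pd i p) x
    exact ContDiff.sum fun i _ => hHsm i i
  -- the divergence-form integrand
  set D : E d → ℝ := fun x => ∑ i, p x *
      (pd i (pd i p) x * G x + pd i p x * (∑ j, 2 * pd j p x * pd i (pd j p) x)) with hDdef
  set Q : E d → ℝ := fun x => ∑ i, ∑ j, (pd i (pd j p) x) ^ 2 with hQdef
  have hQnn : ∀ x, 0 ≤ Q x := fun x =>
    Finset.sum_nonneg fun i _ => Finset.sum_nonneg fun j _ => sq_nonneg _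
  have hQsm : ContDiff ℝ (⊤ : ℕ∞) Q :=
    ContDiff.sum fun i _ => ContDiff.sum fun j _ => (hHsm i j).pow 2
  -- derivative of the product pd i p * G
  have hDh : ∀ (i : Fin d) (x : E d), pd i (fun y => pd i p y * G y) x
      = pd i (pd i p) x * G x + pd i p x * (∑ j, 2 * pd j p x * pd i (pd j p) x) := by
    intro i x
    rw [pd_mul (hA i) hGsm]
    have hGmul : G = fun y => ∑ j, pd j p y * pd j p y := by
      funext y; simp only [hGdef]; exact Finset.sum_congr rfl fun j _ => sq (pd j p y) ▸ by ring
    have : pd i G x = ∑ j, 2 * pd j p x * pd i (pd j p) x := by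
      rw [hGmul, pd_sum (fun j => (hA j).mul (hA j))]
      exact Finset.sum_congr rfl fun j _ => by rw [pd_mul (hA j) (hA j)]; ring
    rw [this]
  -- integration by parts
  have hibp : ∀ i : Fin d, ∫ x, pd i p x * (pd i p x * G x)
      = -∫ x, p x * (pd i (pd i p) x * G x + pd i p x * (∑ j, 2 * pd j p x * pd i (pd j p) x)) := by
    intro i
    have h := ibp hp ((hA i).mul hGsm)
      (hcsOf fun x hx => by rw [ha0 i x hx]; ring) i
    simp only [hDh] at h
    linarith [h]
  -- main identity: ∫ G² = -∫ D
  have hkey : (∫ x, G x ^ 2) = -∫ x, D x := by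
    have hsum : ∀ x, G x ^ 2 = ∑ i, pd i p x * (pd i p x * G x) := by
      intro x
      have h1 : ∑ i, pd i p x * (pd i p x * G x) = (∑ i, (pd i p x) ^ 2) * G x := by
        rw [Finset.sum_mul]; exact Finset.sum_congr rfl fun i _ => by ring
      rw [h1]
      simp only [hGdef]; ring
    have hint1 : ∀ i : Fin d, Integrable (fun x => pd i p x * (pd i p x * G x)) :=
      fun i => hInt ((hA i).continuous.mul ((hA i).continuous.mul hGsm.continuous))
        (fun x hx => by rw [ha0 i x hx]; ring)
    have hint2 : ∀ i : Fin d, Integrable (fun x => p x *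
        (pd i (pd i p) x * G x + pd i p x * (∑ j, 2 * pd j p x * pd i (pd j p) x))) := by
      intro i
      refine hInt (hp.continuous.mul (Continuous.add ((hHsm i i).continuous.mul hGsm.continuous)
        ((hA i).continuous.mul (continuous_finset_sum _ fun j _ =>
          (continuous_const.mul (hA j).continuous).mul (hHsm i j).continuous))))
        (fun x hx => by rw [hp0 x hx]; ring)
    calc (∫ x, G x ^ 2) = ∫ x, ∑ i, pd i p x * (pd i p x * G x) := by simp only [hsum]
      _ = ∑ i, ∫ x, pd i p x * (pd i p x * G x) := integral_finset_sum _ fun i _ => hint1 i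
      _ = ∑ i, -∫ x, p x * (pd i (pd i p) x * G x
            + pd i p x * (∑ j, 2 * pd j p x * pd i (pd j p) x)) :=
          Finset.sum_congr rfl fun i _ => hibp i
      _ = -∑ i, ∫ x, p x * (pd i (pd i p) x * G x
            + pd i p x * (∑ j, 2 * pd j p x * pd i (pd j p) x)) := by
          rw [← Finset.sum_neg_distrib]
      _ = -∫ x, D x := by
          rw [← integral_finset_sum _ fun i _ => hint2 i]
  -- pointwise bound on -D
  have hpt : ∀ x, -D x ≤ (1/2) * G x ^ 2 + p x ^ 2 * (lap p x) ^ 2 + 4 * (p x ^ 2 * Q x) := by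
    intro x
    set S : ℝ := ∑ i, pd i p x * ∑ j, pd j p x * pd i (pd j p) x with hSdef
    have hinner : ∀ i : Fin d, ∑ j, 2 * pd j p x * pd i (pd j p) x
        = 2 * ∑ j, pd j p x * pd i (pd j p) x := by
      intro i; rw [Finset.mul_sum]; exact Finset.sum_congr rfl fun j _ => by ring
    have hDeq : D x = p x * lap p x * G x + 2 * (p x * S) := by
      simp only [hDdef]
      calc ∑ i, p x * (pd i (pd i p) x * G x
              + pd i p x * (∑ j, 2 * pd j p x * pd i (pd j p) x))
          = ∑ i, ((p x * G x) * pd i (pd i p) x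
              + (2 * p x) * (pd i p x * ∑ j, pd j p x * pd i (pd j p) x)) :=
            Finset.sum_congr rfl fun i _ => by rw [hinner i]; ring
        _ = (∑ i, (p x * G x) * pd i (pd i p) x)
              + ∑ i, (2 * p x) * (pd i p x * ∑ j, pd j p x * pd i (pd j p) x) :=
            Finset.sum_add_distrib
        _ = (p x * G x) * (∑ i, pd i (pd i p) x)
              + (2 * p x) * ∑ i, pd i p x * ∑ j, pd j p x * pd i (pd j p) x := by
            rw [← Finset.mul_sum, ← Finset.mul_sum]
        _ = p x * lap p x * G x + 2 * (p x * S) := by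
            simp only [lap, hSdef]; ring
    have hCS : S ^ 2 ≤ G x ^ 2 * Q x := by
      have hflat : S = ∑ q : Fin d × Fin d, (pd q.1 p x * pd q.2 p x) * pd q.1 (pd q.2 p) x := by
        rw [Fintype.sum_prod_type, hSdef]
        exact Finset.sum_congr rfl fun i _ => by
          rw [Finset.mul_sum]; exact Finset.sum_congr rfl fun j _ => by ring
      have h1 := Finset.sum_mul_sq_le_sq_mul_sq Finset.univ
        (fun q : Fin d × Fin d => pd q.1 p x * pd q.2 p x)
        (fun q : Fin d × Fin d => pd q.1 (pd q.2 p) x)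
      have h2 : ∑ q : Fin d × Fin d, (pd q.1 p x * pd q.2 p x) ^ 2 = G x ^ 2 := by
        rw [Fintype.sum_prod_type]
        simp only [hGdef, sq]
        rw [Finset.sum_mul_sum]
        exact Finset.sum_congr rfl fun i _ => Finset.sum_congr rfl fun j _ => by ring
      have h3 : ∑ q : Fin d × Fin d, (pd q.1 (pd q.2 p) x) ^ 2 = Q x := by
        rw [Fintype.sum_prod_type, hQdef]
      rw [hflat]
      calc (∑ q : Fin d × Fin d, (pd q.1 p x * pd q.2 p x) * pd q.1 (pd q.2 p) x) ^ 2
          ≤ (∑ q : Fin d × Fin d, (pd q.1 p x * pd q.2 p x) ^ 2)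
            * ∑ q : Fin d × Fin d, (pd q.1 (pd q.2 p) x) ^ 2 := h1
        _ = G x ^ 2 * Q x := by rw [h2, h3]
    rw [hDeq]
    have := young1 (p x) (G x) (lap p x) S (Q x) (hppos x) (hGnn x) (hQnn x) hCS
    linarith
  -- integrability of everything in the final comparison
  have hintG2 : Integrable (fun x => G x ^ 2) :=
    hInt (hGsm.continuous.pow 2) (fun x hx => by rw [hG0 x hx]; ring)
  have hintPL : Integrable (fun x => p x ^ 2 * (lap p x) ^ 2) :=
    hInt ((hp.continuous.pow 2).mul (hLsm.continuous.pow 2)) (fun x hx => by rw [hp0 x hx]; ring)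
  have hintPQ : Integrable (fun x => p x ^ 2 * Q x) :=
    hInt ((hp.continuous.pow 2).mul hQsm.continuous) (fun x hx => by rw [hp0 x hx]; ring)
  have hintD : Integrable D := by
    refine hInt ?_ (fun x hx => ?_)
    · refine continuous_finset_sum _ fun i _ => hp.continuous.mul (Continuous.add
        ((hHsm i i).continuous.mul hGsm.continuous)
        ((hA i).continuous.mul (continuous_finset_sum _ fun j _ =>
          (continuous_const.mul (hA j).continuous).mul (hHsm i j).continuous)))
    · simp only [hDdef]
      exact Finset.sum_eq_zero fun i _ => by rw [hp0 x hx]; ring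
  -- put it together
  have hmono : (∫ x, -D x)
      ≤ ∫ x, ((1/2) * G x ^ 2 + p x ^ 2 * (lap p x) ^ 2 + 4 * (p x ^ 2 * Q x)) := by
    refine integral_mono hintD.neg ?_ hpt
    exact ((hintG2.const_mul _).add hintPL).add (hintPQ.const_mul _)
  have hsplit : (∫ x, ((1/2) * G x ^ 2 + p x ^ 2 * (lap p x) ^ 2 + 4 * (p x ^ 2 * Q x)))
      = (1/2) * (∫ x, G x ^ 2) + (∫ x, p x ^ 2 * (lap p x) ^ 2)
        + 4 * ∫ x, p x ^ 2 * Q x := by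
    have i1 : Integrable (fun x => (1/2) * G x ^ 2) := hintG2.const_mul _
    have i2 : Integrable (fun x => p x ^ 2 * (lap p x) ^ 2) := hintPL
    have i3 : Integrable (fun x => 4 * (p x ^ 2 * Q x)) := hintPQ.const_mul _
    have i12 : Integrable (fun x => (1/2) * G x ^ 2 + p x ^ 2 * (lap p x) ^ 2) := i1.add i2
    rw [integral_add i12 i3, integral_add i1 i2, integral_const_mul, integral_const_mul]
  have hQpos : 0 ≤ ∫ x, p x ^ 2 * Q x :=
    integral_nonneg fun x => mul_nonneg (sq_nonneg _) (hQnn x)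
  have hLHS : (∫ x, ‖gradient p x‖ ^ 4) = ∫ x, G x ^ 2 := by
    refine integral_congr_ae (Filter.Eventually.of_forall fun x => ?_)
    show ‖gradient p x‖ ^ 4 = G x ^ 2
    have h2 : ‖gradient p x‖ ^ 4 = (‖gradient p x‖ ^ 2) ^ 2 := by ring
    rw [h2, grad_norm_sq hp]
  have final : (∫ x, G x ^ 2) ≤ (1/2) * (∫ x, G x ^ 2)
      + (∫ x, p x ^ 2 * (lap p x) ^ 2) + 4 * ∫ x, p x ^ 2 * Q x := by
    have e1 : (∫ x, G x ^ 2) = ∫ x, -D x := by rw [hkey, integral_neg]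
    calc (∫ x, G x ^ 2) = ∫ x, -D x := e1
      _ ≤ _ := hmono
      _ = _ := hsplit
  rw [hLHS]
  simp only [hQdef] at hQpos final ⊢
  linarith
end
end

section
/- Let d ≥ 1 and let u, v : ℝ^d → ℝ be twice continuously differentiable functions with compact support, and let ε > 0. Then ∫_{{x ∈ ℝ^d : |u(x) − v(x)| < ε}} |∇u(x) − ∇v(x)|² dx ≤ ε ( ∫_{ℝ^d} |Δu(x)| dx + ∫_{ℝ^d} |Δv(x)| dx ). -/
open MeasureTheory Real Set
open scoped RealInnerProductSpace
noncomputable section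

/-!
Put `w = u - v` and `T(s) = max (-ε) (min s ε)`. Integration by parts for Lipschitz functions
gives `∫ ∂ᵢ(T ∘ w) ∂ᵢw = -∫ (T ∘ w) ∂ᵢ∂ᵢw` in each direction, and `|T ∘ w| ≤ ε`. The line
derivatives of `T ∘ w` are exactly those of `w` on `{|w| < ε}` and `0` elsewhere: where
`|w| ≥ ε`, the function `T ∘ w` attains its global maximum or minimum, so its derivative vanishes
whether or not it exists. Summing over `i` turns the left side into `∫_{|w| < ε} |∇w|²`, and
`Δw = Δu - Δv`.
-/

def truncate (ε s : ℝ) : ℝ := max (-ε) (min s ε)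

lemma lipschitzWith_truncate (ε : ℝ) : LipschitzWith 1 (truncate ε) :=
  (LipschitzWith.id.min_const ε).const_max (-ε)

lemma abs_truncate_le {ε : ℝ} (hε : 0 ≤ ε) (s : ℝ) : |truncate ε s| ≤ ε := by
  unfold truncate
  rw [abs_le]
  constructor <;> simp [hε]

lemma truncate_eq_self {ε s : ℝ} (hs : |s| < ε) : truncate ε s = s := by
  rw [abs_lt] at hs
  simp [truncate, hs.1.le, hs.2.le]

lemma neg_le_truncate (ε s : ℝ) : -ε ≤ truncate ε s := le_max_left _ _

lemma truncate_le (ε s : ℝ) : truncate ε s ≤ max (-ε) ε :=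
  max_le_max_left _ (min_le_right _ _)

lemma deriv_truncate_comp {ε t : ℝ} {g : ℝ → ℝ} (hg : ContinuousAt g t) :
    deriv (fun s => truncate ε (g s)) t = if |g t| < ε then deriv g t else 0 := by
  split_ifs with ht
  · refine Filter.EventuallyEq.deriv_eq ?_
    filter_upwards [hg.eventually (isOpen_lt continuous_abs continuous_const |>.mem_nhds ht)]
      with s hs using truncate_eq_self hs
  · rcases le_abs'.mp (not_lt.mp ht) with ht | ht
    · have hmin : truncate ε (g t) = -ε :=
        max_eq_left ((min_le_left _ _).trans ht)
      exact IsLocalMin.deriv_eq_zero <| .of_forall fun s => hmin.trans_le (neg_le_truncate ε (g s))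
    · have hmax : truncate ε (g t) = max (-ε) ε := by rw [truncate, min_eq_right ht]
      exact IsLocalMax.deriv_eq_zero <| .of_forall fun s => (truncate_le ε (g s)).trans_eq hmax.symm

lemma lineDeriv_truncate_comp {E : Type*} [NormedAddCommGroup E] [NormedSpace ℝ E]
    {ε : ℝ} {f : E → ℝ} {x : E} (hf : ContinuousAt f x) (v : E) :
    lineDeriv ℝ (fun y => truncate ε (f y)) x v = if |f x| < ε then lineDeriv ℝ f x v else 0 := by
  have hline : ContinuousAt (fun t : ℝ => f (x + t • v)) 0 :=
    ContinuousAt.comp (by simpa using hf) (by fun_prop)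
  simpa [lineDeriv] using deriv_truncate_comp (ε := ε) hline

lemma gradient_sub {F : Type*} [NormedAddCommGroup F] [InnerProductSpace ℝ F] [CompleteSpace F]
    {f g : F → ℝ} {x : F} (hf : DifferentiableAt ℝ f x) (hg : DifferentiableAt ℝ g x) :
    gradient (f - g) x = gradient f x - gradient g x := by
  simp only [gradient, fderiv_sub hf hg, map_sub]

section Euclidean

variable {d : ℕ} {f g : EuclideanSpace ℝ (Fin d) → ℝ}

lemma contDiff_pd {m n : WithTop ℕ∞} (hf : ContDiff ℝ n f) (hmn : m + 1 ≤ n) (i : Fin d) :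
    ContDiff ℝ m (pd i f) :=
  (hf.fderiv_right hmn).clm_apply contDiff_const

lemma hasCompactSupport_pd (hf : HasCompactSupport f) (i : Fin d) :
    HasCompactSupport (pd i f) :=
  (hf.fderiv ℝ).comp_left
    (g := fun L : EuclideanSpace ℝ (Fin d) →L[ℝ] ℝ => L (EuclideanSpace.single i 1)) rfl

lemma hasCompactSupport_lap (hf : HasCompactSupport f) : HasCompactSupport (lap f) := by
  have hlap : lap f = ∑ i, pd i (pd i f) := by
    ext x
    simp [lap]
  rw [hlap]
  exact Finset.sum_induction _ HasCompactSupport (fun _ _ => .add) .zero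
    fun i _ => hasCompactSupport_pd (hasCompactSupport_pd hf i) i

lemma continuous_pd (hf : ContDiff ℝ 1 f) (i : Fin d) : Continuous (pd i f) :=
  (contDiff_pd hf (m := 0) (by norm_num) i).continuous

lemma continuous_pd_pd (hf : ContDiff ℝ 2 f) (i : Fin d) : Continuous (pd i (pd i f)) :=
  continuous_pd (contDiff_pd hf (by norm_num) i) i

lemma continuous_lap (hf : ContDiff ℝ 2 f) : Continuous (lap f) :=
  continuous_finsetSum _ fun i _ => continuous_pd_pd hf i

lemma integrable_abs_lap (hf : ContDiff ℝ 2 f) (hsf : HasCompactSupport f) :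
    Integrable fun x => |lap f x| :=
  (continuous_lap hf).abs.integrable_of_hasCompactSupport (hasCompactSupport_lap hsf).abs

lemma pd_sub (hf : Differentiable ℝ f) (hg : Differentiable ℝ g) (i : Fin d) :
    pd i (f - g) = pd i f - pd i g := by
  ext x
  simp [pd, fderiv_sub (hf x) (hg x)]

lemma lap_sub (hf : ContDiff ℝ 2 f) (hg : ContDiff ℝ 2 g) : lap (f - g) = lap f - lap g := by
  ext x
  simp only [lap, Pi.sub_apply, ← Finset.sum_sub_distrib]
  refine Finset.sum_congr rfl fun i _ => ?_
  rw [pd_sub (hf.differentiable two_ne_zero) (hg.differentiable two_ne_zero),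
    pd_sub ((contDiff_pd hf (m := 1) (by norm_num) i).differentiable one_ne_zero)
      ((contDiff_pd hg (m := 1) (by norm_num) i).differentiable one_ne_zero)]
  rfl

lemma gradient_apply_eq_pd (f : EuclideanSpace ℝ (Fin d) → ℝ) (x : EuclideanSpace ℝ (Fin d))
    (i : Fin d) : gradient f x i = pd i f x := by
  have h := inner_gradient_left (f := f) (x := x) (y := EuclideanSpace.single i (1 : ℝ))
  rw [EuclideanSpace.inner_single_right] at h
  simpa [pd] using h

lemma norm_gradient_sq_eq_sum (f : EuclideanSpace ℝ (Fin d) → ℝ) (x : EuclideanSpace ℝ (Fin d)) :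
    ‖gradient f x‖ ^ 2 = ∑ i, pd i f x ^ 2 := by
  simp only [EuclideanSpace.real_norm_sq_eq, gradient_apply_eq_pd]

lemma lineDeriv_single_eq_pd {x : EuclideanSpace ℝ (Fin d)} (hf : DifferentiableAt ℝ f x)
    (i : Fin d) :
    lineDeriv ℝ f x (EuclideanSpace.single i 1) = pd i f x :=
  hf.lineDeriv_eq_fderiv

lemma setIntegral_pd_sq_eq (hf : ContDiff ℝ 2 f) (hsf : HasCompactSupport f) (ε : ℝ)
    (i : Fin d) :
    ∫ x in {x | |f x| < ε}, pd i f x ^ 2 = -∫ x, truncate ε (f x) * pd i (pd i f) x := by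
  have hpd : ContDiff ℝ 1 (pd i f) := contDiff_pd hf (by norm_num) i
  obtain ⟨C, hC⟩ := hf.lipschitzWith_of_hasCompactSupport hsf two_ne_zero
  obtain ⟨D, hD⟩ := hpd.lipschitzWith_of_hasCompactSupport (hasCompactSupport_pd hsf i) one_ne_zero
  have hparts := ((lipschitzWith_truncate ε).comp hC).integral_lineDeriv_mul_eq (μ := volume) hD
    (hasCompactSupport_pd hsf i) (EuclideanSpace.single i 1)
  have hS : MeasurableSet {x | |f x| < ε} :=
    (isOpen_lt (continuous_abs.comp hf.continuous) continuous_const).measurableSet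
  simp only [Function.comp_def, lineDeriv_truncate_comp hf.continuous.continuousAt,
    lineDeriv_neg, lineDeriv_single_eq_pd (hf.differentiable two_ne_zero _),
    lineDeriv_single_eq_pd (hpd.differentiable one_ne_zero _)] at hparts
  have hind : {x | |f x| < ε}.indicator (fun x => pd i f x ^ 2)
      = fun x => (if |f x| < ε then pd i f x else 0) * pd i f x := by
    ext x
    by_cases hx : |f x| < ε <;> simp [hx, sq]
  rw [← integral_indicator hS, hind, hparts]
  simp only [neg_mul, integral_neg, mul_comm (pd i (pd i f) _)]

theorem setIntegral_norm_gradient_sq_eq (hf : ContDiff ℝ 2 f) (hsf : HasCompactSupport f)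
    (ε : ℝ) :
    ∫ x in {x | |f x| < ε}, ‖gradient f x‖ ^ 2 = -∫ x, truncate ε (f x) * lap f x := by
  have htw : Continuous fun x => truncate ε (f x) :=
    (lipschitzWith_truncate ε).continuous.comp hf.continuous
  simp only [norm_gradient_sq_eq_sum, lap, Finset.mul_sum]
  rw [integral_finsetSum, integral_finsetSum]
  · simp only [setIntegral_pd_sq_eq hf hsf, Finset.sum_neg_distrib]
  · intro i _
    exact (htw.mul (continuous_pd_pd hf i)).integrable_of_hasCompactSupport
      (hasCompactSupport_pd (hasCompactSupport_pd hsf i) i).mul_left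
  · intro i _
    have hsq : HasCompactSupport fun x => pd i f x ^ 2 := by
      simp only [sq]
      exact (hasCompactSupport_pd hsf i).mul_left
    exact ((continuous_pd (hf.of_le (by norm_num)) i).pow 2).integrable_of_hasCompactSupport
      hsq |>.integrableOn

theorem setIntegral_norm_gradient_sq_le (hf : ContDiff ℝ 2 f) (hsf : HasCompactSupport f)
    {ε : ℝ} (hε : 0 ≤ ε) :
    ∫ x in {x | |f x| < ε}, ‖gradient f x‖ ^ 2 ≤ ε * ∫ x, |lap f x| := by
  rw [setIntegral_norm_gradient_sq_eq hf hsf, ← integral_const_mul]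
  calc -∫ x, truncate ε (f x) * lap f x
      ≤ ∫ x, |truncate ε (f x) * lap f x| := (neg_le_abs _).trans abs_integral_le_integral_abs
    _ ≤ ∫ x, ε * |lap f x| := by
      refine integral_mono_of_nonneg (.of_forall fun x => abs_nonneg _)
        ((integrable_abs_lap hf hsf).const_mul ε) (.of_forall fun x => ?_)
      simp only [abs_mul]
      exact mul_le_mul_of_nonneg_right (abs_truncate_le hε _) (abs_nonneg _)

end Euclidean

theorem stmt12_general (d : ℕ)
    (u v : EuclideanSpace ℝ (Fin d) → ℝ)
    (hu : ContDiff ℝ 2 u) (hv : ContDiff ℝ 2 v)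
    (hsu : HasCompactSupport u) (hsv : HasCompactSupport v)
    (ε : ℝ) (hε : 0 < ε) :
    (∫ x in {x : EuclideanSpace ℝ (Fin d) | |u x - v x| < ε},
        ‖gradient u x - gradient v x‖ ^ 2)
      ≤ ε * ((∫ x, |lap u x|) + (∫ x, |lap v x|)) := by
  have hgrad (x : EuclideanSpace ℝ (Fin d)) : gradient u x - gradient v x = gradient (u - v) x :=
    (gradient_sub (hu.differentiable two_ne_zero x) (hv.differentiable two_ne_zero x)).symm
  have hlap : ∫ x, |lap (u - v) x| ≤ (∫ x, |lap u x|) + ∫ x, |lap v x| := by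
    rw [← integral_add (integrable_abs_lap hu hsu) (integrable_abs_lap hv hsv)]
    refine integral_mono (integrable_abs_lap (hu.sub hv) (hsu.sub hsv))
      ((integrable_abs_lap hu hsu).add (integrable_abs_lap hv hsv)) fun x => ?_
    simpa only [lap_sub hu hv, Pi.sub_apply] using abs_sub (lap u x) (lap v x)
  calc (∫ x in {x | |u x - v x| < ε}, ‖gradient u x - gradient v x‖ ^ 2)
      = ∫ x in {x | |(u - v) x| < ε}, ‖gradient (u - v) x‖ ^ 2 := by
        simp only [hgrad, Pi.sub_apply]
    _ ≤ ε * ∫ x, |lap (u - v) x| :=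
        setIntegral_norm_gradient_sq_le (hu.sub hv) (hsu.sub hsv) hε.le
    _ ≤ ε * ((∫ x, |lap u x|) + ∫ x, |lap v x|) := by gcongr

/-- the truncation estimate: on the set where `|u − v| < ε`, the squared
gradient of the difference is controlled by `ε` times the `L¹` norms of the Laplacians. -/
theorem stmt12 (d : ℕ) (hd : 1 ≤ d)
    (u v : EuclideanSpace ℝ (Fin d) → ℝ)
    (hu : ContDiff ℝ 2 u) (hv : ContDiff ℝ 2 v)
    (hsu : HasCompactSupport u) (hsv : HasCompactSupport v)
    (ε : ℝ) (hε : 0 < ε) :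
    (∫ x in {x : EuclideanSpace ℝ (Fin d) | |u x - v x| < ε},
        ‖gradient u x - gradient v x‖ ^ 2)
      ≤ ε * ((∫ x, |lap u x|) + (∫ x, |lap v x|)) :=
  stmt12_general d u v hu hv hsu hsv ε hε
end
end
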